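/- The set S \ (E_{n_i})^{(i)} is an ideal of S = E(X,P), where (E_{n_i})^{(i)} is the submonoid of S consisting of transformations acting as an element of E_{n_i} on block C_i and as the identity elsewhere. Consequently, any generating set for S contains a generating set for (E_{n_i})^{(i)}. -/

import Mathlib

/-- The semigroup of transformations of `X = Σ q, Fin (n q)` preserving the partition
into the blocks `C_q = {q} × [n_q]`, as a submonoid of the full transformation monoid. -/
def TXP (m : ℕ) (n : Fin m → ℕ) : Submonoid (Function.End (Σ q : Fin m, Fin (n q))) where
  carrier := {f | ∀ q : Fin m, ∃ r : Fin m, ∀ x : Σ q : Fin m, Fin (n q), x.1 = q → (f x).1 = r}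
  one_mem' := fun q => ⟨q, fun _ hx => hx⟩
  mul_mem' := by
    intro a b ha hb q
    obtain ⟨r, hr⟩ := hb q
    obtain ⟨s, hs⟩ := ha r
    exact ⟨s, fun x hx => hs _ (hr x hx)⟩

/-- The submonoid of `T(X,P)` generated by its idempotents. -/
def EXP (m : ℕ) (n : Fin m → ℕ) : Submonoid (Function.End (Σ q : Fin m, Fin (n q))) :=
  Submonoid.closure {f | f ∈ TXP m n ∧ f * f = f}

/-- The copy `(E_{n_i})^{(i)}` of `E_{n_i}` inside `T(X,P)`: maps acting on block `C_i` as an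
element of `E_{n_i} = {1} ∪ (T_{n_i} \ S_{n_i})` and as the identity elsewhere. -/
def blockE (m : ℕ) (n : Fin m → ℕ) (i : Fin m) : Set (Function.End (Σ q : Fin m, Fin (n q))) :=
  {f | (∀ x : Σ q : Fin m, Fin (n q), x.1 ≠ i → f x = x) ∧
    ∃ g : Fin (n i) → Fin (n i), (g = id ∨ ¬ Function.Bijective g) ∧
      ∀ a : Fin (n i), f ⟨i, a⟩ = ⟨i, g a⟩}

/-!
Let `R_i` be the monoid of the maps `g^{(i)}`. If `f ∈ T(X,P)`, `e` is idempotent and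
`f * e ∈ R_i`, then `e, f ∈ R_i`, because `e` fixes its image pointwise; by induction over
products of idempotents, `f * g ∈ R_i` with `f ∈ T(X,P)` and `g ∈ S` forces `f, g ∈ R_i`.
A bijective product of idempotents is the identity, and (Howie) every non-injective self-map of
a finite set is a product of idempotents, so `(E_{n_i})^{(i)} = S ∩ R_i`. Hence membership in
`(E_{n_i})^{(i)}` passes from a product in `S` to its factors, which is the ideal property, and a
word in generators of `S` representing an element of `(E_{n_i})^{(i)}` uses only generators
from `(E_{n_i})^{(i)}`.
-/

open Function

namespace Submonoid

variable {M : Type*} [Monoid M] {s : Set M} {A : Submonoid M}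

theorem mem_and_mem_of_mul_mem_of_mem_closure {B : Submonoid M} (hsB : s ⊆ B)
    (h : ∀ f ∈ B, ∀ e ∈ s, f * e ∈ A → f ∈ A ∧ e ∈ A) {g : M}
    (hg : g ∈ closure s) : ∀ f ∈ B, f * g ∈ A → f ∈ A ∧ g ∈ A := by
  induction hg using closure_induction with
  | mem e he => exact fun f hf => h f hf e he
  | one => exact fun f _ hf => ⟨by rwa [mul_one] at hf, one_mem A⟩
  | mul v w hv _ ihv ihw =>
    intro f hf hfvw
    rw [← mul_assoc] at hfvw
    obtain ⟨hfv, hw⟩ := ihw (f * v) (mul_mem hf (closure_le.mpr hsB hv)) hfvw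
    obtain ⟨hf, hv⟩ := ihv f hf hfv
    exact ⟨hf, mul_mem hv hw⟩

theorem closure_inter_subset_closure_inter
    (h : ∀ a ∈ s, ∀ b ∈ closure s, a * b ∈ A → a ∈ A ∧ b ∈ A) :
    (closure s : Set M) ∩ A ⊆ closure (s ∩ A) := by
  rintro x ⟨hx, hxA⟩
  induction hx using closure_induction_left with
  | one => exact one_mem _
  | mul_left a ha b hb ih =>
    obtain ⟨haA, hbA⟩ := h a ha b hb hxA
    exact mul_mem (subset_closure ⟨ha, haA⟩) (ih hbA)

end Submonoid

namespace Function.End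

section Idempotents

variable {α : Type*}

theorem eq_one_of_bijective_of_mem_closure_isIdempotentElem [Finite α] {u : Function.End α}
    (hu : u ∈ Submonoid.closure {e | IsIdempotentElem e}) (hbij : Bijective u) : u = 1 := by
  induction hu using Submonoid.closure_induction with
  | mem e he =>
    funext x
    exact hbij.1 (congrFun he x)
  | one => rfl
  | mul v w _ _ ihv ihw =>
    have hv : Bijective v := Finite.surjective_iff_bijective.mp hbij.2.of_comp
    have hw : Bijective w := Finite.injective_iff_bijective.mp hbij.1.of_comp
    rw [ihv hv, ihw hw, mul_one]

def collapse [DecidableEq α] (b a : α) : Function.End α := update id b a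

variable [DecidableEq α]

theorem collapse_apply (b a x : α) : collapse b a x = if x = b then a else x :=
  update_apply _ _ _ _

theorem isIdempotentElem_collapse (b a : α) : IsIdempotentElem (collapse b a) := by
  funext x
  change collapse b a (collapse b a x) = collapse b a x
  simp only [collapse_apply]
  split_ifs <;> simp_all

theorem collapse_apply_ne {b a : α} (h : a ≠ b) (x : α) : collapse b a x ≠ b := by
  rw [collapse_apply]
  split_ifs with hx
  exacts [h, hx]

-- The point `b`, missed by `g`, serves as a free slot for swapping `c` and `d`.
theorem swap_mul_eq_collapse_mul {b c d : α} (hc : c ≠ b) (hd : d ≠ b) {g : Function.End α}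
    (hg : ∀ x, g x ≠ b) :
    MulAction.toEndHom (Equiv.swap c d) * g =
      collapse b d * collapse d c * collapse c b * g := by
  funext x
  have hgx := hg x
  change Equiv.swap c d (g x) = collapse b d (collapse d c (collapse c b (g x)))
  simp only [collapse_apply, Equiv.swap_apply_def]
  split_ifs <;> simp_all

theorem toEndHom_mul_mem_closure_isIdempotentElem [Finite α] {b : α} {σ : Equiv.Perm α}
    (hσ : σ b = b) {g : Function.End α} (hg : g ∈ Submonoid.closure {e | IsIdempotentElem e})
    (hgb : ∀ x, g x ≠ b) :
    MulAction.toEndHom σ * g ∈ Submonoid.closure {e | IsIdempotentElem e} := by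
  obtain ⟨τ, rfl⟩ : ∃ τ : Equiv.Perm {x // x ≠ b}, Equiv.Perm.ofSubtype τ = σ :=
    ⟨σ.subtypePerm fun x => σ.injective.ne_iff' hσ,
      Equiv.Perm.ofSubtype_subtypePerm _ fun x hx hxb => hx (hxb ▸ hσ)⟩
  clear hσ
  induction τ using Equiv.Perm.swap_induction_on with
  | one => rwa [map_one, map_one, one_mul]
  | swap_mul τ x y _ ih =>
    have hb : ∀ z, MulAction.toEndHom (Equiv.Perm.ofSubtype τ) (g z) ≠ b := fun z =>
      (Equiv.Perm.ofSubtype_apply_of_mem τ (hgb z)).trans_ne (τ _).2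
    rw [map_mul, map_mul, mul_assoc, Equiv.Perm.ofSubtype_swap_eq,
      swap_mul_eq_collapse_mul (g := MulAction.toEndHom (Equiv.Perm.ofSubtype τ) * g)
        x.2 y.2 hb]
    refine mul_mem (mul_mem (mul_mem ?_ ?_) ?_) ih <;>
      exact Submonoid.subset_closure (isIdempotentElem_collapse _ _)

theorem ncard_update_self_lt [Finite α] {f : α → α} {q : α} (hq : f q ≠ q) :
    {x | update f q q x ≠ x}.ncard < {x | f x ≠ x}.ncard := by
  have : {x | update f q q x ≠ x} = {x | f x ≠ x} \ {q} := by
    ext x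
    by_cases hx : x = q <;> simp [hx]
  exact this ▸ Set.ncard_sdiff_singleton_lt_of_mem hq

-- If `f p = f q` with `f q ≠ q`, then `f = update f q q * collapse q p` and the first factor
-- moves fewer points; when it is a permutation, it fixes `q`, which `collapse q p` misses.
theorem mem_closure_isIdempotentElem_of_not_injective [Finite α] {f : Function.End α}
    (hf : ¬Injective f) : f ∈ Submonoid.closure {e | IsIdempotentElem e} := by
  induction hN : {x | f x ≠ x}.ncard using Nat.strong_induction_on generalizing f with
  | _ N ih =>
  obtain ⟨p, q, hfpq, hpq⟩ := not_injective_iff.mp hf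
  wlog hq : f q ≠ q generalizing p q
  · refine this q p hfpq.symm hpq.symm ?_
    rw [hfpq, not_not.mp hq]
    exact hpq.symm
  set g : Function.End α := update f q q
  have hfactor : f = g * collapse q p := by
    funext x
    change f x = update f q q (collapse q p x)
    by_cases hx : x = q
    · rw [hx, collapse_apply, if_pos rfl]
      exact ((update_of_ne hpq q f).trans hfpq).symm
    · rw [collapse_apply, if_neg hx]
      exact (update_of_ne hx q f).symm
  have hcollapse : collapse q p ∈ Submonoid.closure {e | IsIdempotentElem e} :=
    Submonoid.subset_closure (isIdempotentElem_collapse q p)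
  rw [hfactor]
  by_cases hinj : Injective g
  · let σ := Equiv.ofBijective _ (Finite.injective_iff_bijective.mp hinj)
    exact toEndHom_mul_mem_closure_isIdempotentElem (σ := σ) (update_self q q f) hcollapse
      (collapse_apply_ne hpq)
  · exact mul_mem (ih _ (hN ▸ ncard_update_self_lt hq) hinj rfl) hcollapse

end Idempotents

section Extension

variable {α β : Type*} {ι : β → α}

noncomputable def extendHom (hι : Injective ι) : Function.End β →* Function.End α where
  toFun g := extend ι (fun b => ι (g b)) id
  map_one' := by
    funext x
    rcases em (x ∈ Set.range ι) with ⟨a, rfl⟩ | hx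
    · exact hι.extend_apply _ _ a
    · exact extend_apply' _ _ _ hx
  map_mul' g h := by
    funext x
    change _ = extend ι (fun b => ι (g b)) id (extend ι (fun b => ι (h b)) id x)
    rcases em (x ∈ Set.range ι) with ⟨a, rfl⟩ | hx
    · simp only [hι.extend_apply]
      rfl
    · simp only [extend_apply' _ _ _ hx, id]

variable (hι : Injective ι)

@[simp]
theorem extendHom_apply_self (g : Function.End β) (a : β) : extendHom hι g (ι a) = ι (g a) :=
  hι.extend_apply (fun b => ι (g b)) id a

theorem extendHom_apply_of_notMem_range (g : Function.End β) {x : α} (hx : x ∉ Set.range ι) :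
    extendHom hι g x = x :=
  extend_apply' (fun b => ι (g b)) id x hx

theorem extendHom_injective : Injective (extendHom hι) := fun g h hgh =>
  funext fun a => hι (by simpa using congrFun hgh (ι a))

theorem eq_extendHom_iff {u : Function.End α} {g : Function.End β} :
    u = extendHom hι g ↔ (∀ x ∉ Set.range ι, u x = x) ∧ ∀ a, u (ι a) = ι (g a) := by
  refine ⟨?_, fun ⟨hout, hin⟩ => funext fun x => ?_⟩
  · rintro rfl
    exact ⟨fun x hx => extendHom_apply_of_notMem_range hι g hx, extendHom_apply_self hι g⟩
  · rcases em (x ∈ Set.range ι) with ⟨a, rfl⟩ | hx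
    · rw [hin, extendHom_apply_self]
    · rw [hout x hx, extendHom_apply_of_notMem_range hι g hx]

theorem mem_mrange_extendHom_iff {u : Function.End α} :
    u ∈ MonoidHom.mrange (extendHom hι) ↔
      (∀ x ∉ Set.range ι, u x = x) ∧ ∀ a, u (ι a) ∈ Set.range ι := by
  refine ⟨?_, fun ⟨hout, hin⟩ => ?_⟩
  · rintro ⟨g, rfl⟩
    exact ⟨fun x hx => extendHom_apply_of_notMem_range hι g hx, fun a => by simp⟩
  · choose g hg using hin
    exact ⟨g, ((eq_extendHom_iff hι).mpr ⟨hout, fun a => (hg a).symm⟩).symm⟩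

theorem bijective_extendHom {g : Function.End β} (hg : Bijective g) :
    Bijective (extendHom hι g) := by
  obtain ⟨h, hhg, hgh⟩ : ∃ h : Function.End β, LeftInverse h g ∧ RightInverse h g :=
    bijective_iff_has_inverse.mp hg
  have hl : extendHom hι h * extendHom hι g = 1 := by
    rw [← map_mul, show h * g = 1 from funext hhg, map_one]
  have hr : extendHom hι g * extendHom hι h = 1 := by
    rw [← map_mul, show g * h = 1 from funext hgh, map_one]
  exact bijective_iff_has_inverse.mpr ⟨extendHom hι h, congrFun hl, congrFun hr⟩

end Extension

end Function.End

theorem mem_range_sigmaMk_iff {ι : Type*} {β : ι → Type*} {i : ι} {x : Sigma β} :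
    x ∈ Set.range (Sigma.mk i) ↔ x.1 = i := by
  simp [Set.range_sigmaMk]

section Partition

variable {m : ℕ} {n : Fin m → ℕ} {i : Fin m}

/-- The map `g ↦ g^{(i)}`. -/
noncomputable abbrev blockHom (m : ℕ) (n : Fin m → ℕ) (i : Fin m) :
    Function.End (Fin (n i)) →* Function.End (Σ q : Fin m, Fin (n q)) :=
  Function.End.extendHom (@sigma_mk_injective _ (fun q => Fin (n q)) i)

theorem mem_mrange_blockHom_iff {u : Function.End (Σ q : Fin m, Fin (n q))} :
    u ∈ MonoidHom.mrange (blockHom m n i) ↔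
      (∀ x : Σ q : Fin m, Fin (n q), x.1 ≠ i → u x = x) ∧
        ∀ x : Σ q : Fin m, Fin (n q), x.1 = i → (u x).1 = i := by
  simp only [Function.End.mem_mrange_extendHom_iff, mem_range_sigmaMk_iff]
  refine and_congr_right fun _ => ⟨fun h => ?_, fun h a => h _ rfl⟩
  rintro ⟨q, a⟩ rfl
  exact h a

theorem mem_blockE_iff {u : Function.End (Σ q : Fin m, Fin (n q))} :
    u ∈ blockE m n i ↔
      ∃ g : Function.End (Fin (n i)), (g = 1 ∨ ¬Bijective g) ∧ u = blockHom m n i g := by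
  simp only [blockE, Set.mem_ofPred_eq, Function.End.eq_extendHom_iff, mem_range_sigmaMk_iff]
  exact ⟨fun ⟨hout, g, hg, hin⟩ => ⟨g, hg, hout, hin⟩,
    fun ⟨g, hg, hout, hin⟩ => ⟨hout, g, hg, hin⟩⟩

theorem blockHom_mem_TXP (g : Function.End (Fin (n i))) : blockHom m n i g ∈ TXP m n := by
  obtain ⟨hout, hin⟩ := mem_mrange_blockHom_iff.mp (MonoidHom.mem_mrange.mpr ⟨g, rfl⟩)
  refine fun q => ⟨q, fun x hx => ?_⟩
  by_cases hq : q = i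
  · exact hq ▸ hin x (hx.trans hq)
  · rw [hout x (hx ▸ hq)]
    exact hx

theorem EXP_le_TXP : EXP m n ≤ TXP m n :=
  Submonoid.closure_le.mpr fun _ he => he.1

theorem EXP_le_closure_isIdempotentElem :
    EXP m n ≤ Submonoid.closure {e | IsIdempotentElem e} :=
  Submonoid.closure_mono fun _ he => he.2

theorem blockHom_mem_EXP_of_not_injective {g : Function.End (Fin (n i))} (hg : ¬Injective g) :
    blockHom m n i g ∈ EXP m n := by
  have hmap : (Submonoid.closure {e | IsIdempotentElem e}).map (blockHom m n i) ≤ EXP m n := by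
    rw [MonoidHom.map_mclosure]
    exact Submonoid.closure_mono fun _ ⟨e, he, hu⟩ => hu ▸ ⟨blockHom_mem_TXP e, he.map _⟩
  exact hmap ⟨g, Function.End.mem_closure_isIdempotentElem_of_not_injective hg, rfl⟩

theorem blockE_eq : blockE m n i = (EXP m n : Set _) ∩ MonoidHom.mrange (blockHom m n i) := by
  ext u
  rw [mem_blockE_iff]
  constructor
  · rintro ⟨g, hg | hg, rfl⟩
    · exact ⟨hg ▸ (map_one (blockHom m n i)).symm ▸ one_mem _, g, rfl⟩
    · exact ⟨blockHom_mem_EXP_of_not_injective fun hinj =>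
        hg (Finite.injective_iff_bijective.mp hinj), g, rfl⟩
  · rintro ⟨hu, g, rfl⟩
    refine ⟨g, ?_, rfl⟩
    by_cases hg : Bijective g
    · have h1 : blockHom m n i g = blockHom m n i 1 := by
        rw [map_one]
        exact Function.End.eq_one_of_bijective_of_mem_closure_isIdempotentElem
          (EXP_le_closure_isIdempotentElem hu) (Function.End.bijective_extendHom _ hg)
      exact Or.inl (Function.End.extendHom_injective _ h1)
    · exact Or.inr hg

theorem mem_mrange_blockHom_of_mul_idempotent_mem {f e : Function.End (Σ q : Fin m, Fin (n q))}
    (hf : f ∈ TXP m n) (he : IsIdempotentElem e)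
    (hfe : f * e ∈ MonoidHom.mrange (blockHom m n i)) :
    f ∈ MonoidHom.mrange (blockHom m n i) ∧ e ∈ MonoidHom.mrange (blockHom m n i) := by
  obtain ⟨hout, hin⟩ := mem_mrange_blockHom_iff.mp hfe
  have hout' : ∀ z : Σ q : Fin m, Fin (n q), z.1 ≠ i → f (e z) = z := hout
  have hin' : ∀ z : Σ q : Fin m, Fin (n q), z.1 = i → (f (e z)).1 = i := hin
  have hee : ∀ z, e (e z) = e z := congrFun he
  have he_in : ∀ z : Σ q : Fin m, Fin (n q), z.1 = i → (e z).1 = i := by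
    intro z hz
    by_contra hez
    have := hout' (e z) hez
    rw [hee] at this
    exact hez (this ▸ hin' z hz)
  have he_out : ∀ z : Σ q : Fin m, Fin (n q), z.1 ≠ i → e z = z := by
    intro z hz
    by_cases hez : (e z).1 = i
    · have := hin' (e z) hez
      rw [hee, hout' z hz] at this
      exact absurd this hz
    · have := hout' (e z) hez
      rwa [hee, hout' z hz, eq_comm] at this
  refine ⟨mem_mrange_blockHom_iff.mpr ⟨fun z hz => ?_, fun z hz => ?_⟩,
    mem_mrange_blockHom_iff.mpr ⟨he_out, he_in⟩⟩
  · exact (congrArg f (he_out z hz)).symm.trans (hout' z hz)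
  · obtain ⟨r, hr⟩ := hf i
    rw [hr z hz, ← hr (e z) (he_in z hz)]
    exact hin' z hz

theorem mem_mrange_blockHom_of_mul_mem {f g : Function.End (Σ q : Fin m, Fin (n q))}
    (hf : f ∈ TXP m n) (hg : g ∈ EXP m n) (hfg : f * g ∈ MonoidHom.mrange (blockHom m n i)) :
    f ∈ MonoidHom.mrange (blockHom m n i) ∧ g ∈ MonoidHom.mrange (blockHom m n i) :=
  Submonoid.mem_and_mem_of_mul_mem_of_mem_closure (fun _ he => he.1)
    (fun _ hf _ he => mem_mrange_blockHom_of_mul_idempotent_mem hf he.2) hg f hf hfg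

end Partition

/-- `S \ (E_{n_i})^{(i)}` is an ideal of `S = E(X,P)`; consequently any generating set of
`S` contains a generating set of `(E_{n_i})^{(i)}`. -/
theorem singular_block_complement_ideal (m : ℕ) (n : Fin m → ℕ) (i : Fin m) :
    (∀ f ∈ EXP m n, f ∉ blockE m n i → ∀ g ∈ EXP m n,
        f * g ∉ blockE m n i ∧ g * f ∉ blockE m n i) ∧
    (∀ G : Set (Function.End (Σ q : Fin m, Fin (n q))), G ⊆ (EXP m n : Set _) →
        Submonoid.closure G = EXP m n →
        blockE m n i ⊆ (Submonoid.closure (G ∩ blockE m n i) : Set _)) := by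
  rw [blockE_eq]
  refine ⟨fun f hf hfB g hg => ⟨fun hfg => ?_, fun hgf => ?_⟩, fun G _ hG => ?_⟩
  · exact hfB ⟨hf, (mem_mrange_blockHom_of_mul_mem (EXP_le_TXP hf) hg hfg.2).1⟩
  · exact hfB ⟨hf, (mem_mrange_blockHom_of_mul_mem (EXP_le_TXP hg) hf hgf.2).2⟩
  · rw [← hG]
    refine (Submonoid.closure_inter_subset_closure_inter fun a ha b hb hab => ?_).trans
      (Submonoid.closure_mono fun u ⟨huG, huR⟩ => ⟨huG, Submonoid.subset_closure huG, huR⟩)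
    exact mem_mrange_blockHom_of_mul_mem (EXP_le_TXP (hG ▸ Submonoid.subset_closure ha))
      (hG ▸ hb) hab
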